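/- For all i ≠ j in I, the Serre relations hold in 𝔤𝔩(M): ad(e_i)^{1−a_{ij}}(e_j) = 0 and ad(f_i)^{1−a_{ij}}(f_j) = 0, where a_{ij} = (α_j, α_i^∨) and ad(x)(y) = [x, y]. -/

import Mathlib

noncomputable section

open scoped BigOperators

attribute [local instance] LieRing.ofAssociativeRing

/-- `pr B x y` is the pairing `(x, y^∨) = 2(x,y)/(y,y)`. -/
def pr {E : Type} [AddCommGroup E] [Module ℚ E] (B : E →ₗ[ℚ] E →ₗ[ℚ] ℚ) (x y : E) : ℚ :=
  2 * B x y / B y y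

/-- A reduced irreducible crystallographic root system `Φ` in a finite-dimensional ℚ-vector
space `E` equipped with a positive definite symmetric bilinear form, together with a system of
simple roots `α i` (`i ∈ I`). -/
structure RootSystemCtx (E I : Type) [AddCommGroup E] [Module ℚ E] [Fintype I] : Type where
  B : E →ₗ[ℚ] E →ₗ[ℚ] ℚ
  Bsymm : ∀ x y, B x y = B y x
  Bpos : ∀ x, x ≠ 0 → 0 < B x x
  findim : FiniteDimensional ℚ E
  Φ : Set E
  Φfin : Φ.Finite
  zero_nmem : (0 : E) ∉ Φ
  reduced : ∀ a ∈ Φ, ∀ b ∈ Φ, b ≠ a → b ≠ -a → LinearIndependent ℚ ![a, b]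
  crystal : ∀ a ∈ Φ, ∀ b ∈ Φ, ∃ n : ℤ, pr B b a = (n : ℚ)
  reflect_mem : ∀ a ∈ Φ, ∀ b ∈ Φ, b - pr B b a • a ∈ Φ
  α : I → E
  α_mem : ∀ i, α i ∈ Φ
  α_indep : LinearIndependent ℚ α
  α_span : Submodule.span ℚ (Set.range α) = ⊤
  pos_neg : ∀ b ∈ Φ, (∃ cf : I → ℤ, (∀ i, 0 ≤ cf i) ∧ b = ∑ i, (cf i : ℚ) • α i) ∨
      (∃ cf : I → ℤ, (∀ i, cf i ≤ 0) ∧ b = ∑ i, (cf i : ℚ) • α i)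
  irred : ¬ ∃ Φ₁ Φ₂ : Set E, Φ₁.Nonempty ∧ Φ₂.Nonempty ∧ Φ₁ ∪ Φ₂ = Φ ∧
      ∀ a ∈ Φ₁, ∀ b ∈ Φ₂, B a b = 0

namespace RootSystemCtx

variable {E I : Type} [AddCommGroup E] [Module ℚ E] [Fintype I] (c : RootSystemCtx E I)

/-- The linear functional `(·, a^∨)`. -/
def coform (a : E) : Module.Dual ℚ E := (2 * (c.B a a)⁻¹) • (c.B.flip a)

lemma coform_apply (a x : E) : c.coform a x = pr c.B x a := by
  simp only [coform, LinearMap.smul_apply, LinearMap.flip_apply, smul_eq_mul, pr,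
    div_eq_mul_inv]
  ring

lemma coform_self {a : E} (ha : a ∈ c.Φ) : c.coform a a = 2 := by
  have h0 : a ≠ 0 := fun h => c.zero_nmem (h ▸ ha)
  have hB : c.B a a ≠ 0 := ne_of_gt (c.Bpos a h0)
  rw [coform_apply, pr]
  field_simp

/-- The simple reflection `s i : v ↦ v - (v, αᵢ^∨) αᵢ`. -/
def s (i : I) : E ≃ₗ[ℚ] E := Module.reflection (c.coform_self (c.α_mem i))

lemma s_apply (i : I) (v : E) : c.s i v = v - pr c.B v (c.α i) • c.α i := by
  rw [s, Module.reflection_apply, coform_apply]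

/-- The Weyl group, as a subgroup of the group of linear automorphisms of `E`. -/
def Weyl : Subgroup (E ≃ₗ[ℚ] E) := Subgroup.closure (Set.range c.s)

/-- `lam` is a minuscule (dominant) weight: a nonzero dominant weight (integral pairing
with every simple coroot) with `(lam, a^∨) ∈ {0, ±1}` for every root `a`. -/
def IsMinuscule (lam : E) : Prop :=
  lam ≠ 0 ∧ (∀ i, ∃ n : ℤ, pr c.B lam (c.α i) = (n : ℚ)) ∧ (∀ i, 0 ≤ pr c.B lam (c.α i)) ∧
    ∀ a ∈ c.Φ, pr c.B lam a = 0 ∨ pr c.B lam a = 1 ∨ pr c.B lam a = -1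

/-- `b` is a positive root. -/
def IsPos (b : E) : Prop :=
  b ∈ c.Φ ∧ ∃ cf : I → ℚ, (∀ i, 0 ≤ cf i) ∧ b = ∑ i, cf i • c.α i

end RootSystemCtx

/-- A nonempty union `Ψ` of Weyl group orbits of minuscule weights. -/
structure PsiData {E I : Type} [AddCommGroup E] [Module ℚ E] [Fintype I]
    (c : RootSystemCtx E I) : Type where
  Ψ : Set E
  nonempty : Ψ.Nonempty
  finite : Ψ.Finite
  orbit : ∀ μ ∈ Ψ, ∃ lam, c.IsMinuscule lam ∧ ∃ w ∈ c.Weyl, w lam = μ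
  stab : ∀ μ ∈ Ψ, ∀ w ∈ c.Weyl, w μ ∈ Ψ

/-- `nOp e f i t tinv` is the operator `(1 + t eᵢ)(1 - t⁻¹ fᵢ)(1 + t eᵢ)`, where `tinv`
is the inverse of `t`. -/
def nOp {I K M' : Type} [CommRing K] [AddCommGroup M'] [Module K M']
    (e f : I → Module.End K M') (i : I) (t tinv : K) : Module.End K M' :=
  (1 + t • e i) * (1 - tinv • f i) * (1 + t • e i)

/-- `hOp e f i t` is the operator `hᵢ(t) = nᵢ(t) nᵢ(-1)` for a unit `t`. -/
def hOp {I K M' : Type} [CommRing K] [AddCommGroup M'] [Module K M']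
    (e f : I → Module.End K M') (i : I) (t : Kˣ) : Module.End K M' :=
  nOp e f i (t : K) ((t⁻¹ : Kˣ) : K) * nOp e f i ((-1 : Kˣ) : K) (((-1 : Kˣ)⁻¹ : Kˣ) : K)

/-- Conjugation `n_{i₁} ⋯ n_{i_k} x n_{i_k}⁻¹ ⋯ n_{i₁}⁻¹` for a list `l = [i₁, …, i_k]`. -/
def conjOp {I M' : Type} [AddCommGroup M'] [Module ℂ M'] (nu : I → (Module.End ℂ M')ˣ)
    (x : Module.End ℂ M') (l : List I) : Module.End ℂ M' :=
  ↑((l.map nu).prod) * x * ↑(((l.map nu).prod)⁻¹)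

/-- The Lie subalgebra of `𝔤𝔩(M)` generated by the `eᵢ` and `fᵢ`. -/
def genLie {I M' : Type} [AddCommGroup M'] [Module ℂ M'] (e f : I → Module.End ℂ M') :
    LieSubalgebra ℂ (Module.End ℂ M') :=
  LieSubalgebra.lieSpan ℂ (Module.End ℂ M') (Set.range e ∪ Set.range f)

/-- The root space `𝔤_a = {x ∈ 𝔤 ∣ [hⱼ, x] = (a, αⱼ^∨) x for all j}`, as a set. -/
def rootSet {E I M' : Type} [AddCommGroup E] [Module ℚ E] [Fintype I]
    [AddCommGroup M'] [Module ℂ M'] (c : RootSystemCtx E I)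
    (e f h : I → Module.End ℂ M') (a : E) : Set (Module.End ℂ M') :=
  {x | x ∈ genLie e f ∧ ∀ j, ⁅h j, x⁆ = ((pr c.B a (c.α j) : ℚ) : ℂ) • x}

/-- The root space `𝔤_a`, as a submodule of `𝔤𝔩(M)`. -/
def rootSp {E I M' : Type} [AddCommGroup E] [Module ℚ E] [Fintype I]
    [AddCommGroup M'] [Module ℂ M'] (c : RootSystemCtx E I)
    (e f h : I → Module.End ℂ M') (a : E) : Submodule ℂ (Module.End ℂ M') :=
  (genLie e f).toSubmodule ⊓ ⨅ j : I,
    Module.End.eigenspace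
      (LinearMap.mulLeft ℂ (h j) - LinearMap.mulRight ℂ (h j) : Module.End ℂ (Module.End ℂ M'))
      ((pr c.B a (c.α j) : ℚ) : ℂ)

/-- The diagonal subgroup `H` generated by all `hᵢ(t)`, `t ∈ Kˣ`. -/
def Hgroup {I K M' : Type} [CommRing K] [AddCommGroup M'] [Module K M']
    (e f : I → Module.End K M') : Subgroup (Module.End K M')ˣ :=
  Subgroup.closure {g | ∃ (i : I) (t : Kˣ), (g : Module.End K M') = hOp e f i t}

/-- The monomial subgroup `N` generated by all `nᵢ(t)`, `t ∈ Kˣ`. -/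
def Ngroup {I K M' : Type} [CommRing K] [AddCommGroup M'] [Module K M']
    (e f : I → Module.End K M') : Subgroup (Module.End K M')ˣ :=
  Subgroup.closure {g | ∃ (i : I) (t : Kˣ),
    (g : Module.End K M') = nOp e f i (t : K) ((t⁻¹ : Kˣ) : K)}

/-- The subgroup `U⁺` generated by all `x_γ(t) = 1 + t ē_γ` with `γ ∈ Φ⁺`. -/
def Uplus {E I K M' : Type} [AddCommGroup E] [Module ℚ E] [Fintype I]
    [CommRing K] [AddCommGroup M'] [Module K M'] (c : RootSystemCtx E I)
    (eb : E → Module.End K M') : Subgroup (Module.End K M')ˣ :=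
  Subgroup.closure {g | ∃ γ, c.IsPos γ ∧ ∃ t : K, (g : Module.End K M') = 1 + t • eb γ}

/-- The subgroup `U⁻` generated by all `x_γ(t) = 1 + t ē_γ` with `γ ∈ Φ⁻`. -/
def Uminus {E I K M' : Type} [AddCommGroup E] [Module ℚ E] [Fintype I]
    [CommRing K] [AddCommGroup M'] [Module K M'] (c : RootSystemCtx E I)
    (eb : E → Module.End K M') : Subgroup (Module.End K M')ˣ :=
  Subgroup.closure {g | ∃ γ, c.IsPos (-γ) ∧ ∃ t : K, (g : Module.End K M') = 1 + t • eb γ}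

/-- The subgroup `Uᵢ⁺` generated by all `x_γ(t)` with `γ ∈ Φ⁺`, `γ ≠ αᵢ`. -/
def UplusI {E I K M' : Type} [AddCommGroup E] [Module ℚ E] [Fintype I]
    [CommRing K] [AddCommGroup M'] [Module K M'] (c : RootSystemCtx E I)
    (eb : E → Module.End K M') (i : I) : Subgroup (Module.End K M')ˣ :=
  Subgroup.closure {g | ∃ γ, c.IsPos γ ∧ γ ≠ c.α i ∧ ∃ t : K, (g : Module.End K M') = 1 + t • eb γ}

/-!
On the basis `z_μ`, `eᵢ` sends `z_μ` with `(μ, αᵢ^∨) = -1` to `z_{μ+αᵢ}`, whose pairing with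
`αᵢ^∨` is `1`; so `eᵢ² = 0`, and then `ad(eᵢ)³ = 0`, which settles `aᵢⱼ ≤ -2`.
If `aᵢⱼ = -1`, then `ad(eᵢ)²(eⱼ) = -2 eᵢeⱼeᵢ`, and `eᵢeⱼeᵢ` vanishes because the weight reached
after `eᵢ` and `eⱼ` pairs to `0` with `αᵢ^∨`. If `aᵢⱼ = 0`, then also `aⱼᵢ = 0` and `eᵢ`, `eⱼ`
commute. The `fᵢ` are the same kind of operators for the roots `-αᵢ`.
-/

section Pairing

variable {E : Type} [AddCommGroup E] [Module ℚ E] {B : E →ₗ[ℚ] E →ₗ[ℚ] ℚ}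

lemma pr_add_left (x y a : E) : pr B (x + y) a = pr B x a + pr B y a := by
  simp only [pr, map_add, LinearMap.add_apply]
  ring

lemma pr_neg_right (x a : E) : pr B x (-a) = -pr B x a := by
  simp only [pr, map_neg, LinearMap.neg_apply, neg_neg]
  ring

lemma pr_neg_neg (x a : E) : pr B (-x) (-a) = pr B x a := by
  simp only [pr, map_neg, LinearMap.neg_apply, neg_neg]

lemma pr_self {a : E} (ha : B a a ≠ 0) : pr B a a = 2 := by
  rw [pr, mul_div_assoc, div_self ha, mul_one]

lemma pr_eq_zero_comm (hB : ∀ u v, B u v = B v u) {a b : E} (ha : B a a ≠ 0)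
    (h : pr B b a = 0) : pr B a b = 0 := by
  rw [pr, mul_div_assoc, mul_eq_zero, div_eq_zero_iff] at h
  rw [pr, hB, h.resolve_left two_ne_zero |>.resolve_right ha, mul_zero, zero_div]

end Pairing

namespace RootSystemCtx

variable {E I : Type} [AddCommGroup E] [Module ℚ E] [Fintype I] (c : RootSystemCtx E I)

lemma B_self_ne_zero {a : E} (ha : a ∈ c.Φ) : c.B a a ≠ 0 :=
  (c.Bpos a fun h => c.zero_nmem (h ▸ ha)).ne'

lemma pr_α_α_nonpos {i j : I} (hij : i ≠ j) : pr c.B (c.α j) (c.α i) ≤ 0 := by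
  set p := pr c.B (c.α j) (c.α i)
  let b := Module.Basis.mk c.α_indep c.α_span.ge
  have coord : ∀ cf : I → ℤ, c.α j - p • c.α i = ∑ k, (cf k : ℚ) • c.α k →
      (cf j : ℚ) = 1 ∧ (cf i : ℚ) = -p := by
    intro cf h
    have hb : ∀ k, c.α k = b k := fun k => (Module.Basis.mk_apply _ _ k).symm
    have hrepr := b.repr_sum_self fun k => (cf k : ℚ)
    simp_rw [← hb, ← h, map_sub, map_smul, hb, b.repr_self] at hrepr
    have hj := congrFun hrepr j
    have hi := congrFun hrepr i
    simp only [Finsupp.coe_sub, Pi.sub_apply, Finsupp.smul_single, smul_eq_mul, mul_one,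
      Finsupp.single_eq_same, Finsupp.single_eq_of_ne hij, Finsupp.single_eq_of_ne hij.symm,
      sub_zero, zero_sub] at hj hi
    exact ⟨hj.symm, hi.symm⟩
  -- `sᵢ αⱼ = αⱼ - aᵢⱼ αᵢ` is a root, so its coefficients `1` and `-aᵢⱼ` have the same sign.
  rcases c.pos_neg _ (c.reflect_mem _ (c.α_mem i) _ (c.α_mem j)) with
    ⟨cf, hcf, h⟩ | ⟨cf, hcf, h⟩
  · have := (coord cf h).2
    have : (0 : ℚ) ≤ cf i := by exact_mod_cast hcf i
    linarith
  · have := (coord cf h).1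
    have : (cf j : ℚ) ≤ 0 := by exact_mod_cast hcf j
    linarith

end RootSystemCtx

namespace PsiData

variable {E I : Type} [AddCommGroup E] [Module ℚ E] [Fintype I] {c : RootSystemCtx E I}
  (P : PsiData c)

lemma sub_pr_smul_mem {μ : E} (hμ : μ ∈ P.Ψ) (i : I) :
    μ - pr c.B μ (c.α i) • c.α i ∈ P.Ψ := by
  rw [← c.s_apply]
  exact P.stab μ hμ _ (Subgroup.subset_closure (Set.mem_range_self i))

lemma add_mem_of_pr_eq_neg_one {μ : E} (hμ : μ ∈ P.Ψ) {i : I}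
    (h : pr c.B μ (c.α i) = -1) : μ + c.α i ∈ P.Ψ := by
  simpa [h] using P.sub_pr_smul_mem hμ i

lemma sub_mem_of_pr_eq_one {μ : E} (hμ : μ ∈ P.Ψ) {i : I}
    (h : pr c.B μ (c.α i) = 1) : μ - c.α i ∈ P.Ψ := by
  simpa [h] using P.sub_pr_smul_mem hμ i

end PsiData

section Ring

variable {A : Type*} [Ring A] {x : A}

lemma lie_lie_eq_zero_of_mul_self_eq_zero (hx : x * x = 0) {y : A} (hxyx : x * y * x = 0) :
    ⁅x, ⁅x, y⁆⁆ = 0 := by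
  have hyxx : y * x * x = 0 := by rw [mul_assoc, hx, mul_zero]
  simp only [Ring.lie_def, mul_sub, sub_mul, ← mul_assoc, hx, hxyx, hyxx, zero_mul]
  noncomm_ring

lemma iterate_lie_eq_zero_of_mul_self_eq_zero (hx : x * x = 0) {n : ℕ} (hn : 3 ≤ n) (y : A) :
    (fun w => ⁅x, w⁆)^[n] y = 0 := by
  obtain ⟨k, rfl⟩ := Nat.exists_eq_add_of_le' hn
  have hxx : ∀ w, x * (x * w) = 0 := fun w => by rw [← mul_assoc, hx, zero_mul]
  have hcube : ⁅x, ⁅x, ⁅x, y⁆⁆⁆ = 0 := by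
    simp only [Ring.lie_def, mul_sub, sub_mul, mul_assoc, hx, hxx, mul_zero]
    noncomm_ring
  rw [Function.iterate_add_apply]
  change (fun w => ⁅x, w⁆)^[k] ⁅x, ⁅x, ⁅x, y⁆⁆⁆ = 0
  rw [hcube, Function.iterate_fixed (lie_zero (L := A) x)]

end Ring

-- `eᵢ` is the raising operator for `β = αᵢ`, and `fᵢ` the one for `β = -αᵢ`.
def IsRaisingOp {E M : Type} [AddCommGroup E] [Module ℚ E] [AddCommGroup M] [Module ℂ M]
    (B : E →ₗ[ℚ] E →ₗ[ℚ] ℚ) {Ψ : Set E} (z : Module.Basis Ψ ℂ M) (β : E)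
    (x : Module.End ℂ M) : Prop :=
  ∀ μ : Ψ, (pr B μ β = -1 → ∃ hm : (μ : E) + β ∈ Ψ, x (z μ) = z ⟨_, hm⟩) ∧
    (pr B μ β ≠ -1 → x (z μ) = 0)

namespace IsRaisingOp

variable {E M : Type} [AddCommGroup E] [Module ℚ E] [AddCommGroup M] [Module ℂ M]
  {B : E →ₗ[ℚ] E →ₗ[ℚ] ℚ} {Ψ : Set E} {z : Module.Basis Ψ ℂ M} {β γ : E}
  {x y : Module.End ℂ M}

lemma apply_eq_zero (hx : IsRaisingOp B z β x) {μ : Ψ} (h : pr B μ β ≠ -1) : x (z μ) = 0 :=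
  (hx μ).2 h

lemma exists_apply_eq (hx : IsRaisingOp B z β x) {μ : Ψ} (h : pr B μ β = -1) :
    ∃ hm : (μ : E) + β ∈ Ψ, x (z μ) = z ⟨_, hm⟩ :=
  (hx μ).1 h

lemma mul_eq_zero_of_apply (hx : IsRaisingOp B z β x)
    (hy : ∀ μ : Ψ, pr B μ β = -1 → ∀ hm : (μ : E) + β ∈ Ψ, y (z ⟨_, hm⟩) = 0) :
    y * x = 0 := by
  refine z.ext fun μ => ?_
  rw [Module.End.mul_apply, LinearMap.zero_apply]
  by_cases h : pr B μ β = -1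
  · obtain ⟨hm, hxμ⟩ := hx.exists_apply_eq h
    rw [hxμ, hy μ h hm]
  · rw [hx.apply_eq_zero h, map_zero]

lemma mul_self_eq_zero (hx : IsRaisingOp B z β x) (hβ : pr B β β = 2) : x * x = 0 :=
  hx.mul_eq_zero_of_apply fun μ h _ => hx.apply_eq_zero <| by
    rw [pr_add_left, h, hβ]
    norm_num

lemma mul_mul_eq_zero (hx : IsRaisingOp B z β x) (hy : IsRaisingOp B z γ y)
    (hβ : pr B β β = 2) (hγβ : pr B γ β = -1) : x * y * x = 0 := by
  refine hx.mul_eq_zero_of_apply fun μ h hm => ?_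
  rw [Module.End.mul_apply]
  by_cases h' : pr B ((μ : E) + β) γ = -1
  · obtain ⟨_, hyμ⟩ := hy.exists_apply_eq (μ := ⟨_, hm⟩) h'
    rw [hyμ, hx.apply_eq_zero]
    rw [pr_add_left, pr_add_left, h, hβ, hγβ]
    norm_num
  · rw [hy.apply_eq_zero (μ := ⟨_, hm⟩) h', map_zero]

lemma apply_apply_eq_zero (hx : IsRaisingOp B z β x) (hy : IsRaisingOp B z γ y)
    (hγβ : pr B γ β = 0) {μ : Ψ} (h : pr B μ γ = -1 → pr B μ β ≠ -1) : x (y (z μ)) = 0 := by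
  by_cases hμγ : pr B μ γ = -1
  · obtain ⟨_, hyμ⟩ := hy.exists_apply_eq hμγ
    rw [hyμ, hx.apply_eq_zero]
    rw [pr_add_left, hγβ, add_zero]
    exact h hμγ
  · rw [hy.apply_eq_zero hμγ, map_zero]

lemma exists_apply_apply_eq (hx : IsRaisingOp B z β x) (hy : IsRaisingOp B z γ y)
    (hγβ : pr B γ β = 0) {μ : Ψ} (hμγ : pr B μ γ = -1) (hμβ : pr B μ β = -1) :
    ∃ hm : (μ : E) + γ + β ∈ Ψ, x (y (z μ)) = z ⟨_, hm⟩ := by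
  obtain ⟨hm, hyμ⟩ := hy.exists_apply_eq hμγ
  rw [hyμ]
  exact hx.exists_apply_eq (μ := ⟨_, hm⟩) (by rw [pr_add_left, hγβ, add_zero, hμβ])

lemma commute (hx : IsRaisingOp B z β x) (hy : IsRaisingOp B z γ y) (hβγ : pr B β γ = 0)
    (hγβ : pr B γ β = 0) : Commute x y := by
  refine z.ext fun μ => ?_
  simp only [Module.End.mul_apply]
  by_cases h : pr B μ γ = -1 ∧ pr B μ β = -1
  · obtain ⟨_, hxy⟩ := hx.exists_apply_apply_eq hy hγβ h.1 h.2
    obtain ⟨_, hyx⟩ := hy.exists_apply_apply_eq hx hβγ h.2 h.1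
    rw [hxy, hyx]
    exact congrArg z (Subtype.ext (add_right_comm _ _ _))
  · rw [not_and] at h
    rw [hx.apply_apply_eq_zero hy hγβ h, hy.apply_apply_eq_zero hx hβγ fun h₁ h₂ => h h₂ h₁]

theorem iterate_lie_eq_zero (hB : ∀ u v, B u v = B v u) (hβ : B β β ≠ 0)
    (hx : IsRaisingOp B z β x) (hy : IsRaisingOp B z γ y) {n : ℕ} (hγβ : pr B γ β ≤ 0)
    (hn : (n : ℚ) = 1 - pr B γ β) : (fun w => ⁅x, w⁆)^[n] y = 0 := by
  have hββ : pr B β β = 2 := pr_self hβ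
  have hxx := hx.mul_self_eq_zero hββ
  obtain rfl | rfl | h3 : n = 1 ∨ n = 2 ∨ 3 ≤ n := by
    have : 1 ≤ n := by exact_mod_cast (show (1 : ℚ) ≤ n by linarith)
    omega
  · have hγβ0 : pr B γ β = 0 := by push_cast at hn; linarith
    exact commute_iff_lie_eq.mp (hx.commute hy (pr_eq_zero_comm hB hβ hγβ0) hγβ0)
  · have hγβ1 : pr B γ β = -1 := by push_cast at hn; linarith
    exact lie_lie_eq_zero_of_mul_self_eq_zero hxx (hx.mul_mul_eq_zero hy hββ hγβ1)
  · exact iterate_lie_eq_zero_of_mul_self_eq_zero hxx h3 y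

end IsRaisingOp

/-- Lemma 2.4(c): the Serre relations ad(eᵢ)^(1-aᵢⱼ)(eⱼ) = 0 = ad(fᵢ)^(1-aᵢⱼ)(fⱼ). -/
theorem stmt_3 {E I : Type} [AddCommGroup E] [Module ℚ E] [Fintype I]
    (c : RootSystemCtx E I) (P : PsiData c)
    (M : Type) [AddCommGroup M] [Module ℂ M] (z : Module.Basis P.Ψ ℂ M)
    (e f : I → Module.End ℂ M)
    (he1 : ∀ (i : I) (μ : P.Ψ) (hm : (μ : E) + c.α i ∈ P.Ψ),
      pr c.B (μ : E) (c.α i) = -1 → e i (z μ) = z ⟨(μ : E) + c.α i, hm⟩)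
    (he0 : ∀ (i : I) (μ : P.Ψ), pr c.B (μ : E) (c.α i) ≠ -1 → e i (z μ) = 0)
    (hf1 : ∀ (i : I) (μ : P.Ψ) (hm : (μ : E) - c.α i ∈ P.Ψ),
      pr c.B (μ : E) (c.α i) = 1 → f i (z μ) = z ⟨(μ : E) - c.α i, hm⟩)
    (hf0 : ∀ (i : I) (μ : P.Ψ), pr c.B (μ : E) (c.α i) ≠ 1 → f i (z μ) = 0)
    (i j : I) (hij : i ≠ j) (n : ℕ)
    (hn : (n : ℚ) = 1 - pr c.B (c.α j) (c.α i)) :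
    (fun y => ⁅e i, y⁆)^[n] (e j) = 0 ∧ (fun y => ⁅f i, y⁆)^[n] (f j) = 0 := by
  have he : ∀ k, IsRaisingOp c.B z (c.α k) (e k) := fun k μ =>
    ⟨fun h => ⟨P.add_mem_of_pr_eq_neg_one μ.2 h, he1 k μ _ h⟩, he0 k μ⟩
  have hf : ∀ k, IsRaisingOp c.B z (-c.α k) (f k) := by
    intro k μ
    simp only [← sub_eq_add_neg, pr_neg_right, ne_eq, neg_inj]
    exact ⟨fun h => ⟨P.sub_mem_of_pr_eq_one μ.2 h, hf1 k μ _ h⟩, hf0 k μ⟩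
  have hα : ∀ k, c.B (c.α k) (c.α k) ≠ 0 := fun k => c.B_self_ne_zero (c.α_mem k)
  have hij' := c.pr_α_α_nonpos hij
  refine ⟨(he i).iterate_lie_eq_zero c.Bsymm (hα i) (he j) hij' hn, ?_⟩
  rw [← pr_neg_neg] at hij' hn
  exact (hf i).iterate_lie_eq_zero c.Bsymm (by simpa using hα i) (hf j) hij' hn
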